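/- arXiv:2411.05654 — 5 statements merged into one kernel-verified Lean document; each statement's English description precedes it below -/
import Mathlib

section
/- For real (or rational) x, y and natural numbers m, the integral ∫₀ˣ t^{2u}(t²-x²)^m(t²-y²)^m dt equals (1/(2(m+1))) · Σ_{s=0}^{m} [(-1)^s · C(m,s) / C(m+u+s+1/2, m+1)] · x^{2m+2u+2s+1} · y^{2m-2s}, where C(m+u+s+1/2, m+1) denotes the generalized binomial coefficient (m+u+s+1/2)(m+u+s-1/2)···(u+s+1/2)/(m+1)!. -/
open Finset

/-- Generalized binomial coefficient C(α, n) = α(α-1)⋯(α-n+1)/n!. -/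
noncomputable def gchoose {K : Type*} [Field K] (α : K) (n : ℕ) : K :=
  (∏ i ∈ Finset.range n, (α - i)) / (n.factorial : K)

/-- Rising factorial (a)↑_c = a(a+1)⋯(a+c-1). -/
def asc {R : Type*} [CommRing R] (a : R) (c : ℕ) : R :=
  ∏ i ∈ Finset.range c, (a + i)

/-- Falling factorial (a)↓_c = a(a-1)⋯(a-c+1). -/
def desc {R : Type*} [CommRing R] (a : R) (c : ℕ) : R :=
  ∏ i ∈ Finset.range c, (a - i)

/-- P(a,b) = (a+b)(a+b-1)⋯(a-b), a product of 2b+1 consecutive terms. -/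
def PP {R : Type*} [CommRing R] (a : R) (b : ℕ) : R :=
  ∏ j ∈ Finset.range (2*b+1), (a + (b : R) - j)

/-- The polynomial ∏_{j=lo}^{hi} (y² - (v+j)²), i.e. P(y, v+hi)/P(y, v+lo-1). -/
def Pratio {R : Type*} [CommRing R] (y : R) (v lo hi : ℕ) : R :=
  ∏ j ∈ Finset.Icc lo hi, (y^2 - ((v + j : ℕ) : R)^2)

/-- h_{1,m,u}(x;y). -/
noncomputable def h1 {R : Type*} [CommRing R] [Algebra ℚ R] (m u : ℕ) (x y : R) : R :=
  ∑ s ∈ Finset.range (m+1),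
    algebraMap ℚ R ((-1)^s * (m.choose s : ℚ) / gchoose ((m : ℚ) + u + s + 1/2) (m+1))
      * PP x (m + u + s) * Pratio y u (s+1) m

/-- h_{ℓ,m,u}(x; y₁,…,y_ℓ). -/
noncomputable def hgen {R : Type*} [CommRing R] [Algebra ℚ R] (ℓ m u : ℕ)
    (x : R) (y : Fin ℓ → R) : R :=
  ∑ s ∈ Fintype.piFinset (fun _ : Fin ℓ => Finset.range (m+1)),
    (fun S : ℕ → ℕ =>
      algebraMap ℚ R ((-1)^(S ℓ) / gchoose ((m : ℚ) + u + S ℓ + 1/2) (m+1))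
        * PP x (m + u + S ℓ)
        * ∏ i : Fin ℓ,
            (algebraMap ℚ R (m.choose (s i) : ℚ)
              * Pratio (y i) u (S ((i : ℕ) + 1) + 1) (m + S (i : ℕ))))
    (fun k => ∑ i ∈ Finset.univ.filter (fun i : Fin ℓ => (i : ℕ) < k), s i)

/-- Φ_{m,k,v}(y,z), with the convention that C(m, k-t) = 0 when t > k. -/
def Phi {R : Type*} [CommRing R] (m k v : ℕ) (y z : R) : R :=
  ∑ t ∈ Finset.range (m+1),
    ((m.choose t : R) * (if t ≤ k then (m.choose (k - t) : R) else 0))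
      * Pratio y v (t+1) m * Pratio z v (k+1) (m+t)

private lemma key_sum : ∀ (m : ℕ) (a : ℝ), 0 < a →
    ∑ j ∈ range (m+1), (-1:ℝ)^j * (m.choose j) / (a + j)
      = (m.factorial : ℝ) / ∏ j ∈ range (m+1), (a + j) := by
  intro m
  induction m with
  | zero => intro a ha; simp
  | succ m ih =>
    intro a ha
    have hP : (∏ j ∈ range (m+1), (a + (j:ℝ))) ≠ 0 :=
      Finset.prod_ne_zero_iff.2 (fun j _ => by positivity)
    have hP' : (∏ j ∈ range (m+1), ((a+1) + (j:ℝ))) ≠ 0 :=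
      Finset.prod_ne_zero_iff.2 (fun j _ => by positivity)
    have e3 : ∑ j ∈ range (m+1+1), (-1:ℝ)^j * (m.choose j) / (a + j)
        = ∑ j ∈ range (m+1), (-1:ℝ)^j * (m.choose j) / (a + j) := by
      rw [Finset.sum_range_succ]
      simp [Nat.choose_succ_self]
    have h1 : ∑ j ∈ range (m+2), (-1:ℝ)^j * ((m+1).choose j) / (a + j)
        = (∑ j ∈ range (m+1), (-1:ℝ)^j * (m.choose j) / (a + j))
          - ∑ j ∈ range (m+1), (-1:ℝ)^j * (m.choose j) / ((a+1) + j) := by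
      rw [Finset.sum_range_succ' (fun j => (-1:ℝ)^j * ((m+1).choose j) / (a + j)) (m+1)]
      have e1 : ∀ i, (-1:ℝ)^(i+1) * ((m+1).choose (i+1)) / (a + (i+1:ℕ))
          = (-1:ℝ)^(i+1) * (m.choose (i+1)) / (a + (i+1:ℕ))
            - (-1:ℝ)^i * (m.choose i) / ((a+1) + i) := by
        intro i
        have hc : ((m+1).choose (i+1) : ℝ) = m.choose i + m.choose (i+1) := by
          exact_mod_cast Nat.choose_succ_succ m i
        have hcast : a + ((i+1:ℕ):ℝ) = (a+1) + i := by push_cast; ring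
        rw [hc, hcast]
        ring
      rw [Finset.sum_congr rfl (fun i _ => e1 i), Finset.sum_sub_distrib]
      have e2 : ∑ i ∈ range (m+1), (-1:ℝ)^(i+1) * (m.choose (i+1)) / (a + (i+1:ℕ))
          = (∑ j ∈ range (m+1), (-1:ℝ)^j * (m.choose j) / (a + j))
            - (-1:ℝ)^0 * (m.choose 0) / (a + ((0:ℕ):ℝ)) := by
        have h := Finset.sum_range_succ' (fun j => (-1:ℝ)^j * (m.choose j) / (a + j)) (m+1)
        rw [e3] at h
        rw [h]; ring
      rw [e2]
      simp [Nat.choose_zero_right]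
      ring
    rw [h1, ih a ha, ih (a+1) (by linarith)]
    have Q1 : ∏ j ∈ range (m+2), (a + (j:ℝ)) = (∏ j ∈ range (m+1), (a + (j:ℝ))) * (a + ((m:ℝ)+1)) := by
      rw [prod_range_succ]; push_cast; ring
    have Q2 : ∏ j ∈ range (m+2), (a + (j:ℝ)) = a * ∏ j ∈ range (m+1), ((a+1) + (j:ℝ)) := by
      rw [Finset.prod_range_succ' (fun j => a + (j:ℝ)) (m+1)]
      have h : ∀ i:ℕ, a + ((i+1:ℕ):ℝ) = (a+1)+i := fun i => by push_cast; ring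
      simp only [h, Nat.cast_zero, add_zero]
      ring
    have hQ : (∏ j ∈ range (m+2), (a + (j:ℝ))) ≠ 0 :=
      Finset.prod_ne_zero_iff.2 (fun j _ => by positivity)
    rw [div_sub_div _ _ hP hP', div_eq_div_iff (mul_ne_zero hP hP') hQ]
    have hfac : ((m+1).factorial : ℝ) = ((m:ℝ)+1) * m.factorial := by
      push_cast [Nat.factorial_succ]; ring
    rw [hfac]
    linear_combination ((m.factorial:ℝ) * ∏ j ∈ range (m+1), ((a+1) + (j:ℝ))) * Q1
      - ((m.factorial:ℝ) * ∏ j ∈ range (m+1), (a + (j:ℝ))) * Q2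


/-- integral formula for ∫₀ˣ t^{2u}(t²-x²)^m(t²-y²)^m dt. -/
theorem statement0 (m u : ℕ) (hu : 1 ≤ u) (x y : ℝ) :
    (∫ t in (0:ℝ)..x, t^(2*u) * (t^2 - x^2)^m * (t^2 - y^2)^m) =
      (1 / (2*((m:ℝ)+1))) * ∑ s ∈ Finset.range (m+1),
        ((-1)^s * (m.choose s : ℝ) / gchoose ((m:ℝ) + u + s + 1/2) (m+1))
          * x^(2*m+2*u+2*s+1) * y^(2*(m-s)) := by
  have expand : ∀ t : ℝ, t^(2*u) * (t^2 - x^2)^m * (t^2 - y^2)^m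
      = ∑ s ∈ range (m+1), ∑ j ∈ range (m+1),
          ((m.choose s : ℝ) * (m.choose j) * (-(x^2))^(m-j) * (-(y^2))^(m-s))
            * t^(2*u+2*s+2*j) := by
    intro t
    have hx : (t^2 - x^2)^m = ∑ j ∈ range (m+1), t^(2*j) * (-(x^2))^(m-j) * (m.choose j) := by
      rw [sub_eq_add_neg, add_pow]
      exact Finset.sum_congr rfl (fun j _ => by rw [← pow_mul])
    have hy : (t^2 - y^2)^m = ∑ s ∈ range (m+1), t^(2*s) * (-(y^2))^(m-s) * (m.choose s) := by
      rw [sub_eq_add_neg, add_pow]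
      exact Finset.sum_congr rfl (fun j _ => by rw [← pow_mul])
    rw [hx, hy, Finset.mul_sum]
    refine Finset.sum_congr rfl (fun s _ => ?_)
    rw [Finset.mul_sum, Finset.sum_mul]
    refine Finset.sum_congr rfl (fun j _ => ?_)
    rw [pow_add, pow_add]
    ring
  rw [intervalIntegral.integral_congr (g := fun t => ∑ s ∈ range (m+1), ∑ j ∈ range (m+1),
          ((m.choose s : ℝ) * (m.choose j) * (-(x^2))^(m-j) * (-(y^2))^(m-s))
            * t^(2*u+2*s+2*j)) (fun t _ => expand t)]
  rw [intervalIntegral.integral_finset_sum (fun s _ => by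
    apply Continuous.intervalIntegrable; continuity)]
  have step2 : ∀ s, (∫ t in (0:ℝ)..x, ∑ j ∈ range (m+1),
          ((m.choose s : ℝ) * (m.choose j) * (-(x^2))^(m-j) * (-(y^2))^(m-s))
            * t^(2*u+2*s+2*j))
      = ∑ j ∈ range (m+1),
          ((m.choose s : ℝ) * (m.choose j) * (-(x^2))^(m-j) * (-(y^2))^(m-s))
            * (x^(2*u+2*s+2*j+1) / (2*(u:ℝ)+2*s+2*j+1)) := by
    intro s
    rw [intervalIntegral.integral_finset_sum (fun j _ => by
      apply Continuous.intervalIntegrable; continuity)]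
    refine Finset.sum_congr rfl (fun j _ => ?_)
    rw [intervalIntegral.integral_const_mul, integral_pow]
    congr 1
    rw [zero_pow (by omega), sub_zero]
    push_cast
    ring_nf
  rw [Finset.sum_congr rfl (fun s _ => step2 s), Finset.mul_sum]
  refine Finset.sum_congr rfl (fun s hs => ?_)
  have hsm : s ≤ m := Nat.lt_succ_iff.mp (mem_range.mp hs)
  have ha : (0:ℝ) < (u:ℝ) + s + 1/2 := by positivity
  have hP : (∏ j ∈ range (m+1), ((u:ℝ) + s + 1/2 + (j:ℝ))) ≠ 0 :=
    Finset.prod_ne_zero_iff.2 (fun j _ => by positivity)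
  have hg : gchoose ((m:ℝ) + u + s + 1/2) (m+1)
      = (∏ j ∈ range (m+1), ((u:ℝ) + s + 1/2 + (j:ℝ))) / ((m+1).factorial : ℝ) := by
    unfold gchoose
    congr 1
    rw [← Finset.prod_range_reflect (fun j => (u:ℝ) + s + 1/2 + (j:ℝ)) (m+1)]
    refine Finset.prod_congr rfl (fun i hi => ?_)
    have him : i ≤ m := Nat.lt_succ_iff.mp (mem_range.mp hi)
    have : ((m + 1 - 1 - i : ℕ) : ℝ) = (m:ℝ) - i := by
      rw [show m + 1 - 1 - i = m - i from rfl, Nat.cast_sub him]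
    rw [this]
    ring
  have termeq : ∀ j ∈ range (m+1),
      ((m.choose s : ℝ) * (m.choose j) * (-(x^2))^(m-j) * (-(y^2))^(m-s))
        * (x^(2*u+2*s+2*j+1) / (2*(u:ℝ)+2*s+2*j+1))
      = (((-1:ℝ))^s * (m.choose s) * y^(2*(m-s)) * x^(2*m+2*u+2*s+1) * (1/2))
        * ((-1:ℝ)^j * (m.choose j) / ((u:ℝ) + s + 1/2 + j)) := by
    intro j hj
    have hjm : j ≤ m := Nat.lt_succ_iff.mp (mem_range.mp hj)
    have haj : (u:ℝ) + s + 1/2 + (j:ℝ) ≠ 0 := by positivity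
    have hxs : (-(x^2))^(m-j) = (-1:ℝ)^m * (-1)^j * x^(2*(m-j)) := by
      rw [neg_pow (x^2) (m-j), ← pow_mul x 2 (m-j), ← pow_add, show m + j = (m-j) + 2*j from by omega,
        pow_add, pow_mul]
      norm_num
    have hys : ((-1:ℝ))^m * (-(y^2))^(m-s) = (-1:ℝ)^s * y^(2*(m-s)) := by
      rw [neg_pow (y^2) (m-s), ← pow_mul y 2 (m-s), ← mul_assoc, ← pow_add,
        show m + (m-s) = 2*(m-s) + s from by omega, pow_add, pow_mul]
      norm_num
    have hpow : x^(2*(m-j)) * x^(2*u+2*s+2*j+1) = x^(2*m+2*u+2*s+1) := by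
      rw [← pow_add]; congr 1; omega
    have hden : (2*(u:ℝ)+2*s+2*j+1) = 2*((u:ℝ) + s + 1/2 + j) := by ring
    rw [hxs, hden]
    calc (m.choose s : ℝ) * (m.choose j) * ((-1:ℝ)^m * (-1)^j * x^(2*(m-j))) * (-(y^2))^(m-s)
          * (x^(2*u+2*s+2*j+1) / (2*((u:ℝ) + s + 1/2 + j)))
        = ((m.choose s : ℝ) * (m.choose j) * (-1)^j * ((-1:ℝ)^m * (-(y^2))^(m-s))
            / (2*((u:ℝ) + s + 1/2 + j))) * (x^(2*(m-j)) * x^(2*u+2*s+2*j+1)) := by ring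
      _ = ((m.choose s : ℝ) * (m.choose j) * (-1)^j * ((-1:ℝ)^s * y^(2*(m-s)))
            / (2*((u:ℝ) + s + 1/2 + j))) * x^(2*m+2*u+2*s+1) := by rw [hys, hpow]
      _ = _ := by field_simp
  rw [Finset.sum_congr rfl termeq, ← Finset.mul_sum,
    key_sum m ((u:ℝ) + s + 1/2) ha, hg]
  have hfacne : ((m+1).factorial : ℝ) ≠ 0 := by positivity
  have hfac : ((m+1).factorial : ℝ) = ((m:ℝ)+1) * m.factorial := by
    push_cast [Nat.factorial_succ]; ring
  have hm1 : ((m:ℝ)+1) ≠ 0 := by positivity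
  rw [hfac]
  field_simp
end

section
/- For natural numbers m ≥ 0 and u ≥ 1, the polynomials h_{1,m,u}(x; y) = Σ_{s=0}^{m} [(-1)^s C(m,s) / C(m+u+s+1/2, m+1)] · P(x, m+u+s) · P(y, u+m)/P(y, u+s) satisfy the recurrence ((2u-1)/(2m+4)) · h_{1,m+1,u-1}(x;y) = (x² + y² - (m+u+1)² - u²) · h_{1,m,u}(x;y) - 2 · h_{1,m,u+1}(x;y). -/
open Finset

lemma gchoose_succ (α : ℚ) (n : ℕ) :
    gchoose α (n+1) = gchoose α n * (α - n) / (n+1) := by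
  have h : ((n+1).factorial : ℚ) = (n+1) * n.factorial := by
    rw [Nat.factorial_succ]; push_cast; ring
  rw [gchoose, gchoose, Finset.prod_range_succ, h, div_mul_eq_mul_div, div_div,
    mul_comm ((n.factorial:ℚ)) ((n:ℚ)+1)]

lemma prod_shift (β : ℚ) (n : ℕ) :
    (∏ i ∈ range n, (β + 1 - i)) * (β + 1 - n) = (β + 1) * ∏ i ∈ range n, (β - i) := by
  rw [← Finset.prod_range_succ (fun i => β + 1 - (i:ℚ)) n,
      Finset.prod_range_succ' (fun i => β + 1 - (i:ℚ)) n]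
  push_cast
  rw [mul_comm]
  congr 1
  · norm_num
  · exact Finset.prod_congr rfl fun i _ => by ring

lemma gchoose_shift (α : ℚ) (n : ℕ) :
    gchoose (α+1) n * (α + 1 - n) = gchoose α n * (α + 1) := by
  rw [gchoose, gchoose, div_mul_eq_mul_div, div_mul_eq_mul_div]
  congr 1
  rw [mul_comm (∏ i ∈ range n, (α - i)) (α+1)]
  exact prod_shift α n

lemma gchoose_pos (α : ℚ) (n : ℕ) (h : ∀ i : ℕ, i < n → 0 < α - i) :
    0 < gchoose α n := by
  apply div_pos
  · exact Finset.prod_pos fun i hi => h i (mem_range.1 hi)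
  · exact_mod_cast Nat.factorial_pos n

lemma PP_succ (x : ℚ) (b : ℕ) : PP x (b+1) = (x^2 - ((b:ℚ)+1)^2) * PP x b := by
  have h : 2*(b+1)+1 = (2*b+1)+1+1 := by ring
  rw [PP, h, Finset.prod_range_succ, Finset.prod_range_succ']
  rw [PP]
  have h2 : ∀ j ∈ range (2*b+1), x + ((b:ℚ)+1) - ((j:ℚ)+1) = x + b - j :=
    fun j _ => by ring
  push_cast
  rw [Finset.prod_congr rfl h2]
  push_cast
  ring

lemma Pratio_bot (y : ℚ) (v lo hi : ℕ) (h : lo ≤ hi) :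
    Pratio y v lo hi = (y^2 - ((v+lo:ℕ):ℚ)^2) * Pratio y v (lo+1) hi := by
  rw [Pratio, Pratio, Finset.Icc_add_one_left_eq_Ioc, ← Finset.Ioc_insert_left h,
    Finset.prod_insert (by simp)]

lemma Pratio_top (y : ℚ) (v lo hi : ℕ) (h : lo ≤ hi + 1) :
    Pratio y v lo (hi+1) = Pratio y v lo hi * (y^2 - ((v+(hi+1):ℕ):ℚ)^2) := by
  rw [Pratio, Pratio, Finset.prod_Icc_succ_top h]

lemma Pratio_empty (y : ℚ) (v lo hi : ℕ) (h : hi < lo) : Pratio y v lo hi = 1 := by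
  rw [Pratio, Finset.Icc_eq_empty (by omega), Finset.prod_empty]

lemma Pratio_shift (y : ℚ) (v lo hi : ℕ) :
    Pratio y (v+1) lo hi = Pratio y v (lo+1) (hi+1) := by
  rw [Pratio, Pratio, ← Finset.map_add_right_Icc lo hi 1, Finset.prod_map]
  exact Finset.prod_congr rfl fun j _ => by
    simp only [addRightEmbedding_apply]
    rw [show v + (j+1) = v + 1 + j from by omega]

noncomputable def gg (m v s : ℕ) : ℚ := gchoose ((m:ℚ)+(v:ℚ)+1+(s:ℚ)+1/2) (m+1)

lemma gg_pos (m v s : ℕ) : 0 < gg m v s := by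
  apply gchoose_pos
  intro i hi
  have h1 : (i:ℚ) ≤ m := by exact_mod_cast Nat.lt_succ_iff.1 hi
  have h2 : (0:ℚ) ≤ v := Nat.cast_nonneg v
  have h3 : (0:ℚ) ≤ s := Nat.cast_nonneg s
  linarith

lemma gg_ne (m v s : ℕ) : gg m v s ≠ 0 := ne_of_gt (gg_pos m v s)

lemma gg_succ_eq (m v s : ℕ) :
    gg m v (s+1) = gg m v s * ((m:ℚ)+v+s+5/2) / ((v:ℚ)+s+3/2) := by
  have h := gchoose_shift ((m:ℚ)+v+1+s+1/2) (m+1)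
  rw [gg, gg]
  rw [show ((m:ℚ)+v+1+(↑(s+1):ℚ)+1/2) = ((m:ℚ)+↑v+1+↑s+1/2)+1 from by push_cast; ring]
  have hne : ((v:ℚ)+s+3/2) ≠ 0 := by positivity
  rw [eq_div_iff hne]
  push_cast at h
  linear_combination h

lemma gc2_eq (m v s : ℕ) :
    gchoose ((m:ℚ)+(v:ℚ)+1+(s:ℚ)+1/2) (m+2) = gg m v s * ((v:ℚ)+s+1/2) / ((m:ℚ)+2) := by
  have h := gchoose_succ ((m:ℚ)+v+1+s+1/2) (m+1)
  rw [gg, show (m+2) = (m+1)+1 from rfl, h]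
  push_cast
  have hne : (m:ℚ)+2 ≠ 0 := by positivity
  field_simp
  ring

lemma choose_cast (m s : ℕ) (hs : s ≤ m) :
    (m.choose (s+1) : ℚ) = (m.choose s : ℚ) * ((m:ℚ)-s) / ((s:ℚ)+1) := by
  have h4 : (m.choose (s+1) : ℚ) * ((s:ℚ)+1) = (m.choose s : ℚ) * ((m:ℚ)-s) := by
    have h := congrArg (fun n : ℕ => (n:ℚ)) (Nat.choose_succ_right_eq m s)
    push_cast [Nat.cast_sub hs] at h
    exact h
  have h3 : ((s:ℚ)+1) ≠ 0 := by positivity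
  field_simp
  linear_combination h4

noncomputable def aco (m v s : ℕ) : ℚ := (-1)^s * (m.choose s : ℚ) / gg m v s
noncomputable def bco (m v s : ℕ) : ℚ := (-1)^s * (m.choose s : ℚ) / gg m v (s+1)
noncomputable def cco (m v s : ℕ) : ℚ :=
  (-1)^s * ((m+1).choose s : ℚ) / gchoose ((m:ℚ)+(v:ℚ)+1+(s:ℚ)+1/2) (m+2)

lemma idBase (m v : ℕ) :
    (2*((v:ℚ)+1)-1)/(2*(m:ℚ)+4) * cco m v 0 = aco m v 0 := by
  rw [cco, aco, gc2_eq m v 0]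
  simp only [Nat.choose_zero_right, Nat.cast_one]
  have h1 : gg m v 0 ≠ 0 := gg_ne m v 0
  have h2 : ((v:ℚ)+(0:ℕ)+1/2) ≠ 0 := by push_cast; positivity
  have h3 : (m:ℚ)+2 ≠ 0 := by positivity
  have h4 : 2*(m:ℚ)+4 ≠ 0 := by positivity
  field_simp
  push_cast
  ring

set_option maxHeartbeats 2000000 in
lemma idI (m v s : ℕ) (hs : s ≤ m) :
    (2*((v:ℚ)+1)-1)/(2*(m:ℚ)+4) * cco m v (s+1)
      = aco m v (s+1) + aco m v s - 2*bco m v s := by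
  have hPascal : (((m+1).choose (s+1) : ℕ) : ℚ) = (m.choose s : ℚ) + (m.choose (s+1) : ℚ) := by
    rw [Nat.choose_succ_succ]; push_cast; ring
  rw [cco, aco, aco, bco, gc2_eq m v (s+1), gg_succ_eq m v s, hPascal, choose_cast m s hs]
  set G := gg m v s with hG
  have h1 : gg m v s ≠ 0 := gg_ne m v s
  have h2 : ((v:ℚ)+↑(s+1)+1/2) ≠ 0 := by push_cast; positivity
  have h3 : (m:ℚ)+2 ≠ 0 := by positivity
  have h4 : 2*(m:ℚ)+4 ≠ 0 := by positivity
  have h5 : ((v:ℚ)+s+3/2) ≠ 0 := by positivity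
  have h6 : ((s:ℚ)+1) ≠ 0 := by positivity
  have h7 : ((m:ℚ)+v+s+5/2) ≠ 0 := by positivity
  have h1' : G ≠ 0 := h1
  push_cast
  field_simp
  ring


lemma idII (m v s : ℕ) (hs : s ≤ m) :
    2*((s:ℚ)+1)*((m:ℚ)+2*v+(s:ℚ)+4) * aco m v (s+1)
      + 2 * bco m v s * (((m:ℚ)-(s:ℚ))*((m:ℚ)+2*v+(s:ℚ)+4)) = 0 := by
  rw [aco, bco, gg_succ_eq m v s, choose_cast m s hs]
  have h1 : gg m v s ≠ 0 := gg_ne m v s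
  have h5 : ((v:ℚ)+s+3/2) ≠ 0 := by positivity
  have h6 : ((s:ℚ)+1) ≠ 0 := by positivity
  have h7 : ((m:ℚ)+v+s+5/2) ≠ 0 := by positivity
  push_cast
  field_simp
  ring

noncomputable def bas (m v : ℕ) (x y : ℚ) (s r : ℕ) : ℚ :=
  PP x (m+v+1+s) * Pratio y (v+1) r m

lemma aco_top (m v : ℕ) : aco m v (m+1) = 0 := by
  simp [aco, Nat.choose_succ_self]

lemma basmult (m v : ℕ) (x y : ℚ) (s : ℕ) (hs : s ≤ m) :
    (x^2 + y^2 - ((m:ℚ) + ((v:ℚ)+1) + 1)^2 - ((v:ℚ)+1)^2) * bas m v x y s (s+1)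
      = bas m v x y (s+1) (s+1) + bas m v x y s s
        + 2*(s:ℚ)*((m:ℚ)+2*(v:ℚ)+(s:ℚ)+3) * bas m v x y s (s+1) := by
  simp only [bas]
  rw [show m+v+1+(s+1) = (m+v+1+s)+1 from by omega, PP_succ, Pratio_bot y (v+1) s m hs]
  push_cast
  ring

lemma L1 (m v : ℕ) (x y : ℚ) :
    h1 (m+1) v x y = ∑ s ∈ range (m+2), cco m v s * bas m v x y s s := by
  rw [h1]
  apply Finset.sum_congr rfl
  intro s hs
  rw [bas, cco, ← Pratio_shift]
  rw [show ((↑(m+1):ℚ)+↑v+↑s+1/2) = ((m:ℚ)+(v:ℚ)+1+(s:ℚ)+1/2) from by push_cast; ring]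
  rw [show (m+1)+v+s = m+v+1+s from by omega]
  rw [show (m+1)+1 = m+2 from rfl]
  simp only [Algebra.algebraMap_self_apply]
  ring

lemma L2 (m v : ℕ) (x y : ℚ) :
    h1 m (v+1) x y = ∑ s ∈ range (m+1), aco m v s * bas m v x y s (s+1) := by
  rw [h1]
  apply Finset.sum_congr rfl
  intro s hs
  rw [bas, aco, gg]
  rw [show ((m:ℚ)+↑(v+1)+↑s+1/2) = ((m:ℚ)+(v:ℚ)+1+(s:ℚ)+1/2) from by push_cast; ring]
  rw [show m+(v+1)+s = m+v+1+s from by omega]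
  simp only [Algebra.algebraMap_self_apply]
  ring

lemma L3 (m v : ℕ) (x y : ℚ) :
    h1 m (v+1+1) x y = ∑ s ∈ range (m+1),
      bco m v s * (bas m v x y (s+1) (s+1)
        - ((m:ℚ)-(s:ℚ))*((m:ℚ)+2*(v:ℚ)+(s:ℚ)+4) * bas m v x y (s+1) (s+2)) := by
  rw [h1]
  apply Finset.sum_congr rfl
  intro s hs
  have hsm : s ≤ m := Nat.lt_succ_iff.1 (Finset.mem_range.1 hs)
  have hsplit : Pratio y (v+1+1) (s+1) m
      = Pratio y (v+1) (s+1) m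
        - ((m:ℚ)-(s:ℚ))*((m:ℚ)+2*(v:ℚ)+(s:ℚ)+4) * Pratio y (v+1) (s+2) m := by
    rw [Pratio_shift y (v+1) (s+1) m, show s+1+1 = s+2 from rfl]
    rcases Nat.lt_or_ge s m with h|h
    · rw [Pratio_top y (v+1) (s+2) m (by omega), Pratio_bot y (v+1) (s+1) m (by omega)]
      push_cast
      ring
    · have hse : s = m := le_antisymm hsm h
      subst hse
      rw [Pratio_empty y (v+1) (s+2) (s+1) (by omega), Pratio_empty y (v+1) (s+1) s (by omega)]
      ring
  rw [hsplit]
  simp only [bas]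
  rw [show ((m:ℚ)+↑(v+1+1)+↑s+1/2) = ((m:ℚ)+(v:ℚ)+1+(↑(s+1):ℚ)+1/2) from by push_cast; ring]
  rw [show m+(v+1+1)+s = m+v+1+(s+1) from by omega]
  rw [bco, gg]
  simp only [Algebra.algebraMap_self_apply]
  ring

/-- recurrence for h_{1,m,u}. -/
theorem statement1 (m u : ℕ) (hu : 1 ≤ u) (x y : ℚ) :
    ((2*(u:ℚ) - 1) / (2*(m:ℚ) + 4)) * h1 (m+1) (u-1) x y =
      (x^2 + y^2 - ((m:ℚ) + u + 1)^2 - (u:ℚ)^2) * h1 m u x y - 2 * h1 m (u+1) x y := by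
  obtain ⟨v, rfl⟩ : ∃ v, u = v + 1 := ⟨u - 1, by omega⟩
  rw [show v + 1 - 1 = v from rfl]
  rw [L1, L2, L3]
  push_cast
  have hL : ∑ s ∈ range (m+2),
        (2*((v:ℚ)+1)-1)/(2*(m:ℚ)+4) * (cco m v s * bas m v x y s s)
      = ∑ s ∈ range (m+1),
          (aco m v (s+1) + aco m v s - 2*bco m v s) * bas m v x y (s+1) (s+1)
        + aco m v 0 * bas m v x y 0 0 := by
    rw [Finset.sum_range_succ']
    congr 1
    · apply Finset.sum_congr rfl
      intro s hs
      rw [← mul_assoc, idI m v s (Nat.lt_succ_iff.1 (Finset.mem_range.1 hs))]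
    · rw [← mul_assoc, idBase]
  have hR : (x^2 + y^2 - ((m:ℚ) + ((v:ℚ)+1) + 1)^2 - ((v:ℚ)+1)^2)
        * ∑ s ∈ range (m+1), aco m v s * bas m v x y s (s+1)
      - 2 * ∑ s ∈ range (m+1), bco m v s * (bas m v x y (s+1) (s+1)
          - ((m:ℚ)-(s:ℚ))*((m:ℚ)+2*(v:ℚ)+(s:ℚ)+4) * bas m v x y (s+1) (s+2))
      = ∑ s ∈ range (m+1),
          ((aco m v s - 2*bco m v s) * bas m v x y (s+1) (s+1) + aco m v s * bas m v x y s s)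
        + ∑ s ∈ range (m+1),
          (2*(s:ℚ)*((m:ℚ)+2*(v:ℚ)+(s:ℚ)+3)*aco m v s * bas m v x y s (s+1)
            + 2*bco m v s * (((m:ℚ)-(s:ℚ))*((m:ℚ)+2*(v:ℚ)+(s:ℚ)+4)) * bas m v x y (s+1) (s+2)) := by
    rw [Finset.mul_sum, Finset.mul_sum, ← Finset.sum_sub_distrib, ← Finset.sum_add_distrib]
    apply Finset.sum_congr rfl
    intro s hs
    have hsm : s ≤ m := Nat.lt_succ_iff.1 (Finset.mem_range.1 hs)
    rw [show (x^2 + y^2 - ((m:ℚ) + ((v:ℚ)+1) + 1)^2 - ((v:ℚ)+1)^2)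
          * (aco m v s * bas m v x y s (s+1))
        = aco m v s * ((x^2 + y^2 - ((m:ℚ) + ((v:ℚ)+1) + 1)^2 - ((v:ℚ)+1)^2)
            * bas m v x y s (s+1)) from by ring,
      basmult m v x y s hsm]
    ring
  have hcancel : ∑ s ∈ range (m+1),
        (2*(s:ℚ)*((m:ℚ)+2*(v:ℚ)+(s:ℚ)+3)*aco m v s * bas m v x y s (s+1)
          + 2*bco m v s * (((m:ℚ)-(s:ℚ))*((m:ℚ)+2*(v:ℚ)+(s:ℚ)+4)) * bas m v x y (s+1) (s+2))
      = 0 := by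
    rw [Finset.sum_add_distrib]
    have c1 : ∑ s ∈ range (m+1),
          2*(s:ℚ)*((m:ℚ)+2*(v:ℚ)+(s:ℚ)+3)*aco m v s * bas m v x y s (s+1)
        = ∑ s ∈ range m,
          2*(↑(s+1):ℚ)*((m:ℚ)+2*(v:ℚ)+(↑(s+1):ℚ)+3)*aco m v (s+1) * bas m v x y (s+1) (s+1+1) := by
      rw [Finset.sum_range_succ']
      norm_num
    have c2 : ∑ s ∈ range (m+1),
          2*bco m v s * (((m:ℚ)-(s:ℚ))*((m:ℚ)+2*(v:ℚ)+(s:ℚ)+4)) * bas m v x y (s+1) (s+2)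
        = ∑ s ∈ range m,
          2*bco m v s * (((m:ℚ)-(s:ℚ))*((m:ℚ)+2*(v:ℚ)+(s:ℚ)+4)) * bas m v x y (s+1) (s+2) := by
      rw [Finset.sum_range_succ]
      simp
    rw [c1, c2, ← Finset.sum_add_distrib]
    apply Finset.sum_eq_zero
    intro s hs
    have h := idII m v s (le_of_lt (Finset.mem_range.1 hs))
    push_cast
    linear_combination bas m v x y (s+1) (s+2) * h
  have hA : ∑ s ∈ range (m+1),
        ((aco m v s - 2*bco m v s) * bas m v x y (s+1) (s+1) + aco m v s * bas m v x y s s)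
      = ∑ s ∈ range (m+1),
          (aco m v (s+1) + aco m v s - 2*bco m v s) * bas m v x y (s+1) (s+1)
        + aco m v 0 * bas m v x y 0 0 := by
    rw [Finset.sum_add_distrib]
    have c3 : ∑ s ∈ range (m+1), aco m v s * bas m v x y s s
        = ∑ s ∈ range (m+1), aco m v (s+1) * bas m v x y (s+1) (s+1)
          + aco m v 0 * bas m v x y 0 0 := by
      have hpad : ∑ s ∈ range (m+2), aco m v s * bas m v x y s s
          = ∑ s ∈ range (m+1), aco m v s * bas m v x y s s := by
        rw [Finset.sum_range_succ, aco_top]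
        ring
      rw [← hpad, Finset.sum_range_succ']
    rw [c3, ← add_assoc, ← Finset.sum_add_distrib]
    congr 1
    apply Finset.sum_congr rfl
    intro s hs
    ring
  rw [Finset.mul_sum, hL, hR, hcancel, hA]
  ring
end

section
/- For natural numbers m, u and any k, the identity Σ_{s=0}^{m} [(-1)^s C(m,s) / C(m+s+u+1/2, m+1)] · C(k + m + u + s + 1/2, 2m) = (m+1) · (k)↓_m · (u+k+3/2)↑_m / (u+1/2)↑_{2m+1} holds, where (a)↓_c = a(a-1)···(a-c+1) is the falling factorial, (b)↑_c = b(b+1)···(b+c-1) is the rising factorial, and C(α, n) = (α)↓_n / n! is the generalized binomial coefficient. -/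
open Finset

section Aux
variable {R : Type*} [CommRing R]


lemma asc_zero (a : R) : asc a 0 = 1 := by simp [asc]

lemma asc_succ (a : R) (n : ℕ) : asc a (n+1) = asc a n * (a + n) := by
  simp [asc, Finset.prod_range_succ]

lemma asc_add_right (a : R) (c₁ c₂ : ℕ) :
    asc a (c₁ + c₂) = asc a c₁ * asc (a + c₁) c₂ := by
  rw [asc, asc, asc, Finset.prod_range_add]
  congr 1
  refine Finset.prod_congr rfl fun i _ => ?_
  push_cast; ring

lemma asc_vandermonde (x y : R) : ∀ n : ℕ,
    asc (x + y) n = ∑ t ∈ range (n+1), (n.choose t : R) * (asc x t * asc y (n - t))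
  | 0 => by simp [asc]
  | (n+1) => by
    rw [asc_succ, asc_vandermonde x y n, Finset.sum_mul]
    have key : ∀ t ∈ range (n+1),
        (n.choose t : R) * (asc x t * asc y (n - t)) * (x + y + n)
          = (n.choose t : R) * (asc x (t+1) * asc y (n - t))
            + (n.choose t : R) * (asc x t * asc y (n + 1 - t)) := by
      intro t ht
      rw [mem_range] at ht
      have h1 : n + 1 - t = (n - t) + 1 := by omega
      have h2 : ((t : R) + ((n - t : ℕ) : R)) = (n : R) := by
        rw [← Nat.cast_add]; congr 1; omega
      rw [h1, asc_succ, asc_succ]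
      linear_combination (-((n.choose t : R) * (asc x t * asc y (n - t)))) * h2
    rw [Finset.sum_congr rfl key, Finset.sum_add_distrib]
    rw [Finset.sum_range_succ' (fun t => (((n+1).choose t : R)) * (asc x t * asc y (n+1-t))) (n+1)]
    have e1 : ∀ i ∈ range (n+1),
        (((n+1).choose (i+1) : R)) * (asc x (i+1) * asc y (n+1-(i+1)))
          = (n.choose i : R) * (asc x (i+1) * asc y (n - i))
            + (n.choose (i+1) : R) * (asc x (i+1) * asc y (n - i)) := by
      intro i hi
      have h3 : n + 1 - (i+1) = n - i := by omega
      rw [h3, Nat.choose_succ_succ, Nat.cast_add]; ring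
    rw [Finset.sum_congr rfl e1, Finset.sum_add_distrib]
    have e2 : (∑ i ∈ range (n+1), (n.choose (i+1) : R) * (asc x (i+1) * asc y (n - i)))
        + (((n+1).choose 0 : R)) * (asc x 0 * asc y (n+1-0))
        = ∑ t ∈ range (n+1), (n.choose t : R) * (asc x t * asc y (n + 1 - t)) := by
      have e3 := Finset.sum_range_succ' (fun t => ((n.choose t : R)) * (asc x t * asc y (n+1-t))) n
      have e4 : ∀ i ∈ range n,
          ((n.choose (i+1) : R)) * (asc x (i+1) * asc y (n+1-(i+1)))
            = (n.choose (i+1) : R) * (asc x (i+1) * asc y (n - i)) := by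
        intro i hi
        have h3 : n + 1 - (i+1) = n - i := by omega
        rw [h3]
      rw [Finset.sum_congr rfl e4] at e3
      rw [e3]
      rw [Finset.sum_range_succ (fun i => (n.choose (i+1) : R) * (asc x (i+1) * asc y (n - i))) n]
      simp
    rw [← e2]
    ring



lemma sum_tri (m : ℕ) (f : ℕ → ℕ → R) :
    ∑ s ∈ range (m+1), ∑ t ∈ range (m - s + 1), f s t
      = ∑ n ∈ range (m+1), ∑ s ∈ range (n+1), f s (n - s) := by
  rw [Finset.sum_sigma', Finset.sum_sigma']
  refine Finset.sum_nbij' (fun p => ⟨p.1 + p.2, p.1⟩) (fun q => ⟨q.2, q.1 - q.2⟩) ?_ ?_ ?_ ?_ ?_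
  · rintro ⟨s, t⟩ h
    simp only [Finset.mem_sigma, mem_range] at h ⊢
    omega
  · rintro ⟨n, s⟩ h
    simp only [Finset.mem_sigma, mem_range] at h ⊢
    omega
  · rintro ⟨s, t⟩ h
    simp only [Finset.mem_sigma, mem_range] at h
    simp only [Sigma.mk.inj_iff]
    exact ⟨trivial, heq_of_eq (by omega)⟩
  · rintro ⟨n, s⟩ h
    simp only [Finset.mem_sigma, mem_range] at h
    simp only [Sigma.mk.inj_iff]
    exact ⟨by omega, heq_of_eq rfl⟩
  · rintro ⟨s, t⟩ h
    simp only [Nat.add_sub_cancel_left]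


lemma saalschutz (m : ℕ) (a b c : R) :
    ∑ s ∈ range (m+1),
        (m.choose s : R) * (asc a s * asc b s * asc (c + s) (m - s) * asc (c - a - b) (m - s))
      = asc (c - a) m * asc (c - b) m := by
  set e : R := c - a - b with he
  have step1 : ∀ s ∈ range (m+1),
      (m.choose s : R) * (asc a s * asc b s * asc (c + s) (m - s) * asc e (m - s))
        = ∑ t ∈ range ((m - s) + 1),
            ((m.choose s : R) * ((m - s).choose t : R))
              * (asc a (s + t) * asc b s * asc (c - a) (m - s - t) * asc e (m - s)) := by
    intro s hs
    have hc : (c + (s : R)) = (a + s) + (c - a) := by ring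
    rw [hc, asc_vandermonde (a + (s:R)) (c - a) (m - s)]
    simp only [Finset.mul_sum, Finset.sum_mul]
    refine Finset.sum_congr rfl fun t ht => ?_
    rw [mem_range] at ht
    have hsplit : asc a (s + t) = asc a s * asc (a + s) t := asc_add_right a s t
    rw [hsplit]
    ring
  rw [Finset.sum_congr rfl step1, sum_tri]
  have step2 : ∀ n ∈ range (m+1),
      (∑ s ∈ range (n+1),
        ((m.choose s : R) * ((m - s).choose (n - s) : R))
          * (asc a (s + (n - s)) * asc b s * asc (c - a) (m - s - (n - s)) * asc e (m - s)))
        = (m.choose n : R) * asc a n * asc (c - a) m * asc e (m - n) := by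
    intro n hn
    rw [mem_range] at hn
    have inner : ∀ s ∈ range (n+1),
        ((m.choose s : R) * ((m - s).choose (n - s) : R))
          * (asc a (s + (n - s)) * asc b s * asc (c - a) (m - s - (n - s)) * asc e (m - s))
        = ((m.choose n : R) * asc a n * asc (c - a) (m - n) * asc e (m - n))
            * ((n.choose s : R) * (asc b s * asc (e + ((m - n : ℕ) : R)) (n - s))) := by
      intro s hs
      rw [mem_range] at hs
      have h1 : s + (n - s) = n := by omega
      have h2 : m - s - (n - s) = m - n := by omega
      have h3 : (m.choose s : R) * ((m - s).choose (n - s) : R)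
          = (m.choose n : R) * (n.choose s : R) := by
        rw [← Nat.cast_mul, ← Nat.cast_mul, ← Nat.choose_mul (by omega : s ≤ n)]
      have h4 : asc e (m - s) = asc e (m - n) * asc (e + ((m - n : ℕ) : R)) (n - s) := by
        have : m - s = (m - n) + (n - s) := by omega
        rw [this, asc_add_right]
      rw [h1, h2, h3, h4]
      ring
    rw [Finset.sum_congr rfl inner, ← Finset.mul_sum]
    have hvm : ∑ s ∈ range (n+1), ((n.choose s : R) * (asc b s * asc (e + ((m - n : ℕ) : R)) (n - s)))
        = asc (b + (e + ((m - n : ℕ) : R))) n := (asc_vandermonde b _ n).symm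
    rw [hvm]
    have hba : b + (e + ((m - n : ℕ) : R)) = (c - a) + ((m - n : ℕ) : R) := by
      rw [he]; ring
    rw [hba]
    have hsplit : asc (c - a) m = asc (c - a) (m - n) * asc ((c - a) + ((m - n : ℕ) : R)) n := by
      conv_lhs => rw [show m = (m - n) + n by omega]
      rw [asc_add_right]
    rw [hsplit]
    ring
  rw [Finset.sum_congr rfl step2]
  have final : ∑ n ∈ range (m+1), (m.choose n : R) * asc a n * asc (c - a) m * asc e (m - n)
      = asc (c - a) m * ∑ n ∈ range (m+1), (m.choose n : R) * (asc a n * asc e (m - n)) := by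
    rw [Finset.mul_sum]
    refine Finset.sum_congr rfl fun n hn => ?_
    ring
  rw [final, ← asc_vandermonde a e m]
  have : a + e = c - b := by rw [he]; ring
  rw [this]


lemma asc_congr {a b : R} (h : a = b) (n : ℕ) : asc a n = asc b n := by rw [h]

lemma desc_eq_asc (a : R) (n : ℕ) : desc a n = asc (a - n + 1) n := by
  rw [desc, asc, ← Finset.prod_range_reflect]
  refine Finset.prod_congr rfl fun j hj => ?_
  rw [mem_range] at hj
  have h1 : ((n - 1 - j : ℕ) : R) = (n : R) - 1 - j := by
    have : (n - 1 - j : ℕ) = n - (1 + j) := by omega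
    rw [this]
    rw [Nat.cast_sub (by omega)]
    push_cast; ring
  rw [h1]; ring

lemma desc_eq_pow_asc (a : R) (n : ℕ) : desc a n = (-1)^n * asc (-a) n := by
  rw [desc, asc]
  rw [show ((-1 : R))^n = ∏ _i ∈ range n, (-1 : R) by simp]
  rw [← Finset.prod_mul_distrib]
  refine Finset.prod_congr rfl fun i _ => by ring

lemma desc_add_right (a : R) (c₁ c₂ : ℕ) :
    desc a (c₁ + c₂) = desc a c₁ * desc (a - c₁) c₂ := by
  rw [desc, desc, desc, Finset.prod_range_add]
  congr 1
  refine Finset.prod_congr rfl fun i _ => ?_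
  push_cast; ring

lemma neg_one_sq_pow (m : ℕ) : ((-1 : R))^m * (-1)^m = 1 := by
  rw [← pow_add, ← two_mul, pow_mul]
  simp


lemma dagger (m : ℕ) (v k : R) :
    ∑ s ∈ range (m+1),
        (-1)^s * (m.choose s : R)
          * (asc v s * asc (v + m + s + 1) (m - s) * desc (k + m + v + s) (2*m))
      = asc ((m:R)+1) m * desc k m * asc (k + v + 1) m := by
  have key : ∀ s ∈ range (m+1),
      (-1)^s * (m.choose s : R)
          * (asc v s * asc (v + m + s + 1) (m - s) * desc (k + m + v + s) (2*m))
        = ((-1)^m * asc (k + v + 1) m)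
            * ((m.choose s : R) * (asc v s * asc (k + (m:R) + v + 1) s
                * asc ((v + (m:R) + 1) + s) (m - s) * asc ((v + (m:R) + 1) - v - (k + (m:R) + v + 1)) (m - s))) := by
    intro s hs
    rw [mem_range] at hs
    have hd : desc (k + m + v + s) (2*m)
        = asc (k + (m:R) + v + 1) s * asc (k + v + 1) m * desc (k + v) (m - s) := by
      rw [show 2*m = s + (m + (m - s)) by omega, desc_add_right, desc_add_right]
      have ea : desc (k + (m:R) + v + (s:R)) s = asc (k + (m:R) + v + 1) s := by
        rw [desc_eq_asc]; exact asc_congr (by ring) s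
      have eb : desc (k + (m:R) + v + (s:R) - (s:R)) m = asc (k + v + 1) m := by
        rw [desc_eq_asc]; exact asc_congr (by ring) m
      have ec : k + (m:R) + v + (s:R) - (s:R) - (m:R) = k + v := by ring
      rw [ea, eb, ec]
      ring
    have hds : desc (k + v) (m - s) = (-1)^(m-s) * asc (-(k + v)) (m - s) :=
      desc_eq_pow_asc _ _
    have hsgn : ((-1:R))^s * (-1)^(m - s) = (-1)^m := by
      rw [← pow_add, show s + (m - s) = m by omega]
    have h1 : asc (v + m + s + 1) (m - s) = asc ((v + (m:R) + 1) + s) (m - s) :=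
      asc_congr (by ring) _
    have h2 : asc ((v + (m:R) + 1) - v - (k + (m:R) + v + 1)) (m - s) = asc (-(k+v)) (m - s) :=
      asc_congr (by ring) _
    rw [hd, hds, h1, h2]
    calc (-1:R)^s * (m.choose s : R) * (asc v s * asc ((v + (m:R) + 1) + s) (m - s)
          * (asc (k + (m:R) + v + 1) s * asc (k + v + 1) m * ((-1)^(m-s) * asc (-(k + v)) (m - s))))
        = ((-1:R)^s * (-1)^(m-s)) * ((m.choose s : R) * (asc v s * asc (k + (m:R) + v + 1) s
            * asc ((v + (m:R) + 1) + s) (m - s) * asc (-(k+v)) (m - s))) * asc (k + v + 1) m := by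
          ring
      _ = _ := by rw [hsgn]; ring
  rw [Finset.sum_congr rfl key, ← Finset.mul_sum,
      saalschutz m v (k + (m:R) + v + 1) (v + (m:R) + 1)]
  have h3 : asc (v + (m:R) + 1 - v) m = asc ((m:R)+1) m := asc_congr (by ring) m
  have h4 : asc (v + (m:R) + 1 - (k + (m:R) + v + 1)) m = asc (-k) m := asc_congr (by ring) m
  have h5 : asc (-k) m = (-1)^m * desc k m := by
    rw [desc_eq_pow_asc]
    rw [show (-1:R)^m * ((-1)^m * asc (-k) m) = ((-1:R)^m * (-1)^m) * asc (-k) m by ring,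
        neg_one_sq_pow, one_mul]
  rw [h3, h4, h5]
  calc (-1:R)^m * asc (k+v+1) m * (asc ((m:R)+1) m * ((-1)^m * desc k m))
      = ((-1:R)^m * (-1)^m) * (asc ((m:R)+1) m * desc k m * asc (k+v+1) m) := by ring
    _ = _ := by rw [neg_one_sq_pow]; ring

end Aux

lemma gchoose_eq {K : Type*} [Field K] (α : K) (n : ℕ) :
    gchoose α n = desc α n / (n.factorial : K) := rfl

lemma asc_pos (v : ℚ) (hv : 0 < v) (n : ℕ) : 0 < asc v n := by
  refine Finset.prod_pos fun i _ => ?_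
  positivity

lemma asc_factorial_cast (n : ℕ) : ∀ c : ℕ,
    asc ((n:ℚ)+1) c * (n.factorial : ℚ) = ((n + c).factorial : ℚ)
  | 0 => by simp [asc]
  | (c+1) => by
    rw [show asc ((n:ℚ)+1) (c+1) = asc ((n:ℚ)+1) c * (((n:ℚ)+1) + c) by
          simp [asc, Finset.prod_range_succ]]
    have ih := asc_factorial_cast n c
    have : ((n + (c+1)).factorial : ℚ) = ((n + c).factorial : ℚ) * (((n:ℚ)+1) + c) := by
      rw [show n + (c+1) = (n+c) + 1 by omega, Nat.factorial_succ]
      push_cast; ring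
    rw [this, ← ih]; ring

/-- binomial-sum identity (consequence of Pfaff–Saalschütz). -/
theorem statement2 (m u : ℕ) (k : ℚ) :
    ∑ s ∈ Finset.range (m+1),
        ((-1)^s * (m.choose s : ℚ) / gchoose ((m:ℚ) + s + u + 1/2) (m+1))
          * gchoose (k + m + u + s + 1/2) (2*m) =
      ((m:ℚ)+1) * desc k m * asc ((u:ℚ) + k + 3/2) m / asc ((u:ℚ) + 1/2) (2*m+1) := by
  set v : ℚ := (u:ℚ) + 1/2 with hv
  have hvpos : 0 < v := by positivity
  have hD : asc ((u:ℚ) + 1/2) (2*m+1) ≠ 0 := ne_of_gt (asc_pos _ hvpos _)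
  rw [eq_div_iff hD, Finset.sum_mul]
  have hfac1 : ((m+1).factorial : ℚ) ≠ 0 := Nat.cast_ne_zero.2 (Nat.factorial_ne_zero _)
  have hfac2 : (((2*m)).factorial : ℚ) ≠ 0 := Nat.cast_ne_zero.2 (Nat.factorial_ne_zero _)
  have key : ∀ s ∈ range (m+1),
      ((-1)^s * (m.choose s : ℚ) / gchoose ((m:ℚ) + s + u + 1/2) (m+1))
          * gchoose (k + m + u + s + 1/2) (2*m) * asc ((u:ℚ) + 1/2) (2*m+1)
        = (((m+1).factorial : ℚ) / (((2*m)).factorial : ℚ))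
            * ((-1)^s * (m.choose s : ℚ)
                * (asc v s * asc (v + m + s + 1) (m - s) * desc (k + m + v + s) (2*m))) := by
    intro s hs
    rw [mem_range] at hs
    have hα : gchoose ((m:ℚ) + s + u + 1/2) (m+1)
        = asc (v + s) (m+1) / ((m+1).factorial : ℚ) := by
      rw [gchoose_eq, desc_eq_asc,
        show (m:ℚ) + s + u + 1/2 - ((m+1 : ℕ) : ℚ) + 1 = v + s by push_cast; ring]
    have hβ : gchoose (k + m + u + s + 1/2) (2*m)
        = desc (k + m + v + s) (2*m) / (((2*m)).factorial : ℚ) := by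
      rw [gchoose_eq, show k + (m:ℚ) + u + s + 1/2 = k + m + v + s by rw [hv]; ring]
    have hsplit : asc ((u:ℚ) + 1/2) (2*m+1)
        = asc v s * (asc (v + s) (m+1) * asc (v + s + ((m+1 : ℕ) : ℚ)) (m - s)) := by
      rw [show (2*m+1) = s + ((m+1) + (m-s)) by omega, asc_add_right, asc_add_right, hv]
    have hne : asc (v + s) (m+1) ≠ 0 := by
      have : (0:ℚ) < v + s := by positivity
      exact ne_of_gt (asc_pos _ this _)
    have harg : asc (v + s + ((m+1 : ℕ) : ℚ)) (m - s) = asc (v + m + s + 1) (m - s) := by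
      refine asc_congr ?_ _
      push_cast; ring
    rw [hα, hβ, hsplit, harg]
    field_simp
  rw [Finset.sum_congr rfl key, ← Finset.mul_sum, dagger m v k]
  have hfac : asc ((m:ℚ)+1) m * (m.factorial : ℚ) = (((2*m)).factorial : ℚ) := by
    rw [show 2*m = m + m by omega]
    exact asc_factorial_cast m m
  have hms : ((m+1).factorial : ℚ) = ((m:ℚ) + 1) * (m.factorial : ℚ) := by
    rw [Nat.factorial_succ]; push_cast; ring
  have hargs : asc (k + v + 1) m = asc ((u:ℚ) + k + 3/2) m := by
    refine asc_congr ?_ _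
    rw [hv]; ring
  rw [hargs, div_mul_eq_mul_div, div_eq_iff hfac2, hms]
  linear_combination (((m:ℚ)+1) * desc k m * asc ((u:ℚ) + k + 3/2) m) * hfac
end

section
/- Modulo the ideal (x + y + m) in ℚ[x, y], for each 0 ≤ s ≤ m the polynomial P(x, m+u+s) · Π_{j=s+1}^{m}(y² - (u+j)²) is divisible by (x - m - u)↑_{3m+2u+1}; consequently h_{1,m,u}(x; y) belongs to the ideal ((x - m - u)↑_{3m+2u+1}) + (x + y + m). -/
open Finset

lemma dvd_prod_sub_prod {R : Type*} [CommRing R] (a : R) (s : Finset ℕ) (f g : ℕ → R)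
    (h : ∀ i ∈ s, a ∣ f i - g i) : a ∣ ∏ i ∈ s, f i - ∏ i ∈ s, g i := by
  classical
  induction s using Finset.induction_on with
  | empty => simp
  | @insert j t hj ih =>
    rw [Finset.prod_insert hj, Finset.prod_insert hj]
    have h1 : a ∣ f j - g j := h j (Finset.mem_insert_self _ _)
    have h2 : a ∣ ∏ i ∈ t, f i - ∏ i ∈ t, g i := ih fun i hi => h i (Finset.mem_insert_of_mem hi)
    have : f j * ∏ i ∈ t, f i - g j * ∏ i ∈ t, g i
        = f j * (∏ i ∈ t, f i - ∏ i ∈ t, g i) + (f j - g j) * ∏ i ∈ t, g i := by ring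
    rw [this]
    exact dvd_add (Dvd.dvd.mul_left h2 _) (Dvd.dvd.mul_right h1 _)

lemma key_dvd {R : Type*} [CommRing R] (x : R) (m u s : ℕ) (hs : s ≤ m) :
    asc (x - (m:R) - (u:R)) (3*m+2*u+1) ∣
      PP x (m+u+s) * Pratio (-(x+(m:R))) u (s+1) m := by
  set b := m + u + s with hb
  set f : ℕ → R := fun k => x - ((m+u+s : ℕ) : R) + (k : R) with hf
  have hPP : PP x b = ∏ k ∈ Finset.range (2*b+1), f k := by
    rw [PP, ← Finset.prod_range_reflect]
    refine Finset.prod_congr rfl fun j hj => ?_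
    rw [Finset.mem_range] at hj
    have hj' : j ≤ 2 * b := by omega
    simp only [hf]
    rw [show 2*b+1-1-j = 2*b - j by omega, Nat.cast_sub hj']
    push_cast [hb]
    ring
  have hasc : asc (x - (m:R) - (u:R)) (3*m+2*u+1)
      = ∏ k ∈ Finset.Ico s (3*m+2*u+1+s), f k := by
    rw [Finset.prod_Ico_eq_prod_range, show 3*m+2*u+1+s - s = 3*m+2*u+1 by omega, asc]
    refine Finset.prod_congr rfl fun k _ => ?_
    simp only [hf]
    push_cast
    ring
  have hPr : Pratio (-(x+(m:R))) u (s+1) m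
      = (∏ j ∈ Finset.Icc (s+1) m, (x + (m:R) - (u:R) - (j:R)))
        * ∏ k ∈ Finset.Ico (2*b+1) (3*m+2*u+1+s), f k := by
    have step1 : Pratio (-(x+(m:R))) u (s+1) m
        = ∏ j ∈ Finset.Icc (s+1) m, ((x + (m:R) - (u:R) - (j:R)) * (x + (m:R) + (u:R) + (j:R))) := by
      rw [Pratio]
      refine Finset.prod_congr rfl fun j _ => ?_
      push_cast
      ring
    have step2 : ∏ j ∈ Finset.Icc (s+1) m, (x + (m:R) + (u:R) + (j:R))
        = ∏ k ∈ Finset.Ico (2*b+1) (3*m+2*u+1+s), f k := by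
      rw [show Finset.Icc (s+1) m = Finset.Ico (s+1) (m+1) by rw [Finset.Ico_add_one_right_eq_Icc]]
      rw [Finset.prod_Ico_eq_prod_range, Finset.prod_Ico_eq_prod_range,
        show m+1-(s+1) = m - s by omega, show 3*m+2*u+1+s - (2*b+1) = m - s by omega]
      refine Finset.prod_congr rfl fun k _ => ?_
      simp only [hf]
      push_cast [hb]
      ring
    rw [step1, Finset.prod_mul_distrib, step2]
  refine ⟨(∏ j ∈ Finset.Icc (s+1) m, (x + (m:R) - (u:R) - (j:R)))
    * ∏ k ∈ Finset.Ico 0 s, f k, ?_⟩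
  rw [hPP, hPr, hasc, Finset.range_eq_Ico,
    ← Finset.prod_Ico_consecutive f (Nat.zero_le s) (show s ≤ 2*b+1 by omega),
    ← Finset.prod_Ico_consecutive f (show s ≤ 2*b+1 by omega) (show 2*b+1 ≤ 3*m+2*u+1+s by omega)]
  ring

lemma pratio_sub {R : Type*} [CommRing R] (y z : R) (v lo hi : ℕ) :
    (y - z) ∣ Pratio y v lo hi - Pratio z v lo hi := by
  refine dvd_prod_sub_prod _ _ _ _ fun j _ => ?_
  have : y^2 - ((v+j : ℕ):R)^2 - (z^2 - ((v+j : ℕ):R)^2) = (y - z) * (y + z) := by ring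
  rw [this]
  exact Dvd.intro _ rfl

open MvPolynomial in
/-- each term of h_{1,m,u}, and hence h_{1,m,u} itself, lies in the ideal
((x-m-u)↑_{3m+2u+1}) + (x+y+m). -/
theorem statement6 (m u : ℕ) :
    (∀ s ≤ m,
      PP (X 0) (m+u+s) * Pratio (X 1) u (s+1) m
        ∈ Ideal.span ({asc (X 0 - (m : MvPolynomial (Fin 2) ℚ) - (u : MvPolynomial (Fin 2) ℚ))
              (3*m+2*u+1), X 0 + X 1 + (m : MvPolynomial (Fin 2) ℚ)} : Set (MvPolynomial (Fin 2) ℚ))) ∧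
    h1 m u (X 0) (X 1)
      ∈ Ideal.span ({asc (X 0 - (m : MvPolynomial (Fin 2) ℚ) - (u : MvPolynomial (Fin 2) ℚ))
            (3*m+2*u+1), X 0 + X 1 + (m : MvPolynomial (Fin 2) ℚ)} : Set (MvPolynomial (Fin 2) ℚ)) := by
    classical
  set A : MvPolynomial (Fin 2) ℚ :=
    asc (X 0 - (m : MvPolynomial (Fin 2) ℚ) - (u : MvPolynomial (Fin 2) ℚ)) (3*m+2*u+1) with hA
  set B : MvPolynomial (Fin 2) ℚ := X 0 + X 1 + (m : MvPolynomial (Fin 2) ℚ) with hB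
  have hAmem : A ∈ Ideal.span ({A, B} : Set (MvPolynomial (Fin 2) ℚ)) :=
    Ideal.subset_span (by simp)
  have hBmem : B ∈ Ideal.span ({A, B} : Set (MvPolynomial (Fin 2) ℚ)) :=
    Ideal.subset_span (by simp)
  have key : ∀ s ≤ m,
      PP (X 0) (m+u+s) * Pratio (X 1) u (s+1) m
        ∈ Ideal.span ({A, B} : Set (MvPolynomial (Fin 2) ℚ)) := by
    intro s hs
    set z : MvPolynomial (Fin 2) ℚ := -(X 0 + (m : MvPolynomial (Fin 2) ℚ)) with hz
    have h1 : A ∣ PP (X 0) (m+u+s) * Pratio z u (s+1) m := key_dvd (X 0) m u s hs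
    have h2 : B ∣ Pratio (X 1) u (s+1) m - Pratio z u (s+1) m := by
      have := pratio_sub (R := MvPolynomial (Fin 2) ℚ) (X 1) z u (s+1) m
      have hXz : X 1 - z = B := by rw [hz, hB]; ring
      rwa [hXz] at this
    have hsplit : PP (X 0) (m+u+s) * Pratio (X 1) u (s+1) m
        = PP (X 0) (m+u+s) * (Pratio (X 1) u (s+1) m - Pratio z u (s+1) m)
          + PP (X 0) (m+u+s) * Pratio z u (s+1) m := by ring
    rw [hsplit]
    refine Ideal.add_mem _ ?_ ?_
    · obtain ⟨q, hq⟩ := h2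
      rw [hq]
      exact Ideal.mul_mem_left _ _ (Ideal.mul_mem_right _ _ hBmem)
    · obtain ⟨q, hq⟩ := h1
      rw [hq]
      exact Ideal.mul_mem_right _ _ hAmem
  refine ⟨key, ?_⟩
  rw [h1]
  refine Ideal.sum_mem _ fun s hs => ?_
  rw [mul_assoc]
  exact Ideal.mul_mem_left _ _ (key s (by
    rw [Finset.mem_range] at hs; omega))
end

section
/- For ℓ ≥ 1 and natural numbers m, u, the polynomial h_{ℓ,m,u}(x; y₁, …, y_ℓ) is a symmetric function of y₁, …, y_ℓ, and for each 1 ≤ i ≤ ℓ it satisfies h_{ℓ,m,u}(x; y₁,…,y_ℓ) = Σ_{k=0}^{m} (-1)^k C(m,k) · [P(y_i, u+m)/P(y_i, u+k)] · h_{ℓ-1,m,u+k}(x; y₁,…,ŷ_i,…,y_ℓ), where ŷ_i denotes omission. -/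
open Finset

noncomputable section
namespace St10

lemma Pratio_shift (y : ℚ) (v k lo hi : ℕ) :
    Pratio y (v+k) lo hi = Pratio y v (k+lo) (k+hi) := by
  unfold Pratio
  rw [← Finset.map_add_left_Icc lo hi k, Finset.prod_map]
  refine Finset.prod_congr rfl (fun j _ => ?_)
  simp only [addLeftEmbedding_apply]
  rw [show v + (k + j) = v + k + j from by omega]

lemma Pratio_empty (y : ℚ) (v lo hi : ℕ) (h : hi < lo) : Pratio y v lo hi = 1 := by
  unfold Pratio
  rw [Finset.Icc_eq_empty (by omega), Finset.prod_empty]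

lemma Pratio_top (y : ℚ) (v lo hi : ℕ) (h : lo ≤ hi + 1) :
    Pratio y v lo (hi+1) = Pratio y v lo hi * (y^2 - ((v+hi+1 : ℕ) : ℚ)^2) := by
  unfold Pratio
  rw [Finset.prod_Icc_succ_top h]
  norm_num [show v + (hi+1) = v + hi + 1 from by omega]

lemma Pratio_bot (y : ℚ) (v lo hi : ℕ) (h : lo ≤ hi) :
    Pratio y v lo hi = (y^2 - ((v+lo : ℕ) : ℚ)^2) * Pratio y v (lo+1) hi := by
  unfold Pratio
  rw [← Finset.Ico_add_one_right_eq_Icc, ← Finset.Ico_add_one_right_eq_Icc,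
    Finset.prod_eq_prod_Ico_succ_bot (by omega)]

def pcoef (m : ℕ) (y : ℚ) (k u : ℕ) : ℚ :=
  (-1)^k * (m.choose k : ℚ) * Pratio y u (k+1) m

lemma pcoef_eq_zero (m : ℕ) (y : ℚ) (k u : ℕ) (h : m < k) : pcoef m y k u = 0 := by
  simp [pcoef, Nat.choose_eq_zero_of_lt h]

lemma lemA (m : ℕ) (y : ℚ) (k u : ℕ) :
    pcoef m y (k+1) u * (((k:ℚ)+1) * (2*(u:ℚ)+(k:ℚ)+(m:ℚ)+2))
      = pcoef m y k (u+1) - pcoef m y k u := by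
  rcases lt_or_ge k m with h | h
  · have e1 : Pratio y u (k+1) m = (y^2 - ((u+(k+1) : ℕ) : ℚ)^2) * Pratio y u (k+2) m :=
      Pratio_bot y u (k+1) m (by omega)
    have e2 : Pratio y (u+1) (k+1) m = Pratio y u (k+2) (m+1) := by
      have := Pratio_shift y u 1 (k+1) m
      rw [this, show 1+(k+1) = k+2 from by omega, show 1+m = m+1 from by omega]
    have e3 : Pratio y u (k+2) (m+1) = Pratio y u (k+2) m * (y^2 - ((u+m+1 : ℕ) : ℚ)^2) :=
      Pratio_top y u (k+2) m (by omega)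
    have hc : ((m.choose (k+1) : ℚ)) * ((k:ℚ)+1) = (m.choose k : ℚ) * ((m:ℚ) - (k:ℚ)) := by
      rw [show (m:ℚ) - (k:ℚ) = ((m - k : ℕ) : ℚ) from by
        rw [Nat.cast_sub h.le]]
      exact_mod_cast Nat.choose_succ_right_eq m k
    rw [pcoef, pcoef, pcoef, e2, e3, e1]
    push_cast
    linear_combination (-(-1:ℚ)^k * Pratio y u (k+2) m * (2*(u:ℚ)+k+m+2)) * hc
  · rcases eq_or_lt_of_le h with rfl | h2
    · have h1 : Pratio y (u+1) (m+1) m = 1 := Pratio_empty _ _ _ _ (by omega)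
      have h2 : Pratio y u (m+1) m = 1 := Pratio_empty _ _ _ _ (by omega)
      simp [pcoef, Nat.choose_eq_zero_of_lt (Nat.lt_succ_self m), h1, h2]
    · simp [pcoef, Nat.choose_eq_zero_of_lt h2, Nat.choose_eq_zero_of_lt (by omega : m < k+1)]


def cc (m : ℕ) (y z : ℚ) (K u : ℕ) : ℚ :=
  ∑ t ∈ Finset.range (K+1), pcoef m y t u * pcoef m z (K-t) (u+t)

lemma lemB (m : ℕ) (y z : ℚ) (K u : ℕ) :
    cc m y z (K+1) u * (((K:ℚ)+1) * (2*(u:ℚ)+(K:ℚ)+(m:ℚ)+2))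
      = cc m y z K (u+1) - cc m y z K u := by
  have key : ∀ t ∈ Finset.range (K+2),
      pcoef m y t u * pcoef m z (K+1-t) (u+t) * (((K:ℚ)+1) * (2*(u:ℚ)+(K:ℚ)+(m:ℚ)+2))
      = (pcoef m y t u * (((t:ℚ)) * (2*(u:ℚ)+(t:ℚ)+(m:ℚ)+1))) * pcoef m z (K+1-t) (u+t)
        + pcoef m y t u * (pcoef m z (K+1-t) (u+t)
            * (((K+1-t : ℕ) : ℚ) * (2*((u:ℚ)+(t:ℚ))+((K+1-t : ℕ):ℚ)+(m:ℚ)+1))) := by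
    intro t ht
    have h1 : t ≤ K+1 := by simpa [Nat.lt_succ_iff] using Finset.mem_range.1 ht
    have h2 : ((K+1-t : ℕ) : ℚ) = (K:ℚ)+1-(t:ℚ) := by
      rw [Nat.cast_sub h1]; push_cast; ring
    rw [h2]; ring
  rw [cc, Finset.sum_mul, Finset.sum_congr rfl key, Finset.sum_add_distrib]
  have sum1 : ∑ t ∈ Finset.range (K+2),
      (pcoef m y t u * (((t:ℚ)) * (2*(u:ℚ)+(t:ℚ)+(m:ℚ)+1))) * pcoef m z (K+1-t) (u+t)
      = ∑ s ∈ Finset.range (K+1),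
          (pcoef m y s (u+1) - pcoef m y s u) * pcoef m z (K-s) (u+s+1) := by
    rw [Finset.sum_range_succ']
    simp only [Nat.cast_zero, Nat.cast_succ]
    rw [show pcoef m y 0 u * ((0:ℚ) * (2*(u:ℚ)+0+(m:ℚ)+1)) * pcoef m z (K+1-0) (u+0) = 0
      from by ring]
    rw [add_zero]
    refine Finset.sum_congr rfl (fun s hs => ?_)
    rw [show K+1-(s+1) = K-s from by omega, show u+(s+1) = u+s+1 from by omega,
      show ((s:ℚ)+1) * (2*(u:ℚ)+((s:ℚ)+1)+(m:ℚ)+1) = ((s:ℚ)+1) * (2*(u:ℚ)+(s:ℚ)+(m:ℚ)+2)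
        from by ring, lemA m y s u]
  have sum2 : ∑ t ∈ Finset.range (K+2),
      pcoef m y t u * (pcoef m z (K+1-t) (u+t)
        * (((K+1-t : ℕ) : ℚ) * (2*((u:ℚ)+(t:ℚ))+((K+1-t : ℕ):ℚ)+(m:ℚ)+1)))
      = ∑ t ∈ Finset.range (K+1),
          pcoef m y t u * (pcoef m z (K-t) (u+t+1) - pcoef m z (K-t) (u+t)) := by
    rw [Finset.sum_range_succ]
    rw [show K+1-(K+1) = 0 from by omega]
    norm_num
    refine Finset.sum_congr rfl (fun t ht => ?_)
    have h1 : t ≤ K := by simpa [Nat.lt_succ_iff] using Finset.mem_range.1 ht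
    have h2 : K+1-t = (K-t)+1 := by omega
    congr 1
    rw [h2]
    have h3 : ((K-t : ℕ) : ℚ) + 1 = (((K-t)+1 : ℕ) : ℚ) := by push_cast; ring
    have h4 := lemA m z (K-t) (u+t)
    rw [show u+t+1 = (u+t)+1 from rfl]
    rw [← h4]
    have h5 : ((((K-t)+1) : ℕ) : ℚ) = ((K-t : ℕ) : ℚ)+1 := by push_cast; ring
    rw [h5]
    have h6 : ((K-t : ℕ) : ℚ) = (K:ℚ)-(t:ℚ) := by rw [Nat.cast_sub h1]
    have h7 : ((u+t : ℕ) : ℚ) = (u:ℚ)+(t:ℚ) := by push_cast; ring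
    rw [h6, h7]
    ring
  rw [sum1, sum2, cc, cc, ← Finset.sum_sub_distrib, ← Finset.sum_add_distrib]
  refine Finset.sum_congr rfl (fun t ht => ?_)
  rw [show u+1+t = u+t+1 from by omega]
  ring

lemma cc_comm (m : ℕ) (y z : ℚ) : ∀ K u, cc m y z K u = cc m z y K u := by
  intro K
  induction K with
  | zero => intro u; simp [cc, mul_comm]
  | succ K ih =>
    intro u
    have hne : (((K:ℚ)+1) * (2*(u:ℚ)+(K:ℚ)+(m:ℚ)+2)) ≠ 0 := by positivity
    apply mul_right_cancel₀ hne
    rw [lemB, lemB, ih, ih]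

lemma regroup (m u : ℕ) (y z : ℚ) (F : ℕ → ℚ) :
    ∑ p ∈ Finset.range (m+1) ×ˢ Finset.range (m+1),
        pcoef m y p.1 u * pcoef m z p.2 (u+p.1) * F (p.1+p.2)
      = ∑ K ∈ Finset.range (2*m+1), cc m y z K u * F K := by
  have hmap : ∀ p ∈ Finset.range (m+1) ×ˢ Finset.range (m+1),
      p.1 + p.2 ∈ Finset.range (2*m+1) := by
    intro p hp
    rw [Finset.mem_product, Finset.mem_range, Finset.mem_range] at hp
    rw [Finset.mem_range]; omega
  rw [← Finset.sum_fiberwise_of_maps_to hmap]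
  refine Finset.sum_congr rfl (fun K hK => ?_)
  have step1 : ∀ p ∈ (Finset.range (m+1) ×ˢ Finset.range (m+1)).filter
      (fun p => p.1 + p.2 = K),
      pcoef m y p.1 u * pcoef m z p.2 (u+p.1) * F (p.1+p.2)
      = (pcoef m y p.1 u * pcoef m z (K-p.1) (u+p.1)) * F K := by
    intro p hp
    rw [Finset.mem_filter] at hp
    rw [hp.2, show K - p.1 = p.2 from by omega]
  rw [Finset.sum_congr rfl step1, ← Finset.sum_mul]
  congr 1
  rw [cc]
  have step3 : ∑ p ∈ (Finset.range (m+1) ×ˢ Finset.range (m+1)).filter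
        (fun p => p.1 + p.2 = K),
        pcoef m y p.1 u * pcoef m z (K-p.1) (u+p.1)
      = ∑ t ∈ (Finset.range (K+1)).filter (fun t => t ≤ m ∧ K - t ≤ m),
          pcoef m y t u * pcoef m z (K-t) (u+t) := by
    refine Finset.sum_nbij' (fun p => p.1) (fun t => (t, K-t)) ?_ ?_ ?_ ?_ ?_
    · intro p hp
      rw [Finset.mem_filter, Finset.mem_product, Finset.mem_range, Finset.mem_range] at hp
      rw [Finset.mem_filter, Finset.mem_range]
      omega
    · intro t ht
      rw [Finset.mem_filter, Finset.mem_range] at ht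
      rw [Finset.mem_filter, Finset.mem_product, Finset.mem_range, Finset.mem_range]
      omega
    · intro p hp
      rw [Finset.mem_filter, Finset.mem_product] at hp
      ext
      · rfl
      · simp only []
        omega
    · intro t ht; rfl
    · intro p hp; rfl
  rw [step3]
  refine Finset.sum_filter_of_ne (fun t ht hne => ?_)
  by_contra hcon
  apply hne
  rcases not_and_or.1 hcon with hc | hc
  · rw [pcoef_eq_zero m y t u (by omega), zero_mul]
  · rw [pcoef_eq_zero m z (K-t) (u+t) (by omega), mul_zero]

lemma swap_sum (m u : ℕ) (y z : ℚ) (F : ℕ → ℚ) :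
    ∑ p ∈ Finset.range (m+1) ×ˢ Finset.range (m+1),
        pcoef m y p.1 u * pcoef m z p.2 (u+p.1) * F (p.1+p.2)
      = ∑ p ∈ Finset.range (m+1) ×ˢ Finset.range (m+1),
        pcoef m z p.1 u * pcoef m y p.2 (u+p.1) * F (p.1+p.2) := by
  rw [regroup, regroup]
  exact Finset.sum_congr rfl (fun K _ => by rw [cc_comm])

def SS {l : ℕ} (s : Fin l → ℕ) (k : ℕ) : ℕ :=
  ∑ i ∈ Finset.univ.filter (fun i : Fin l => (i:ℕ) < k), s i

lemma SS_zero {l : ℕ} (s : Fin l → ℕ) : SS s 0 = 0 := by simp [SS]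

lemma SS_cons {l : ℕ} (k : ℕ) (s' : Fin l → ℕ) (j : ℕ) :
    SS (Fin.cons k s') (j+1) = k + SS s' j := by
  rw [SS, SS, Finset.sum_filter, Finset.sum_filter, Fin.sum_univ_succ]
  simp only [Fin.cons_zero, Fin.cons_succ, Fin.val_zero, Fin.val_succ]
  rw [if_pos (by omega : (0:ℕ) < j+1)]
  congr 1
  refine Finset.sum_congr rfl (fun i _ => ?_)
  congr 1
  simp only [eq_iff_iff]
  omega

lemma hgen_eq (l m u : ℕ) (x : ℚ) (y : Fin l → ℚ) :
    hgen l m u x y = ∑ s ∈ Fintype.piFinset (fun _ : Fin l => Finset.range (m+1)),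
      ((-1:ℚ))^(SS s l) / gchoose ((m:ℚ)+(u:ℚ)+(SS s l : ℚ)+1/2) (m+1)
        * PP x (m+u+SS s l)
        * ∏ i : Fin l, ((m.choose (s i) : ℚ) * Pratio (y i) u (SS s ((i:ℕ)+1)+1) (m+SS s (i:ℕ))) := by
  simp only [hgen, SS, Algebra.algebraMap_self, RingHom.id_apply, map_div₀]

lemma peel1 (l m u : ℕ) (x : ℚ) (y : Fin (l+1) → ℚ) :
    hgen (l+1) m u x y
      = ∑ k ∈ Finset.range (m+1), pcoef m (y 0) k u * hgen l m (u+k) x (y ∘ Fin.succ) := by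
  simp only [hgen_eq]
  simp only [Finset.mul_sum]
  rw [← Finset.sum_product']
  refine (Finset.sum_nbij' (fun s => ((s 0 : ℕ), (Fin.tail s : Fin l → ℕ)))
    (fun p => Fin.cons p.1 p.2) ?_ ?_ ?_ ?_ ?_).symm.symm
  · intro s hs
    rw [Fintype.mem_piFinset] at hs
    rw [Finset.mem_product, Fintype.mem_piFinset]
    exact ⟨hs 0, fun i => hs i.succ⟩
  · intro p hp
    rw [Finset.mem_product, Fintype.mem_piFinset] at hp
    rw [Fintype.mem_piFinset]
    intro i
    refine Fin.cases ?_ ?_ i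
    · simpa using hp.1
    · intro j; simpa using hp.2 j
  · intro s hs
    exact Fin.cons_self_tail s
  · intro p hp
    ext
    · simp
    · simp [Fin.tail]
  · intro s hs
    have hS : ∀ j, SS s (j+1) = s 0 + SS (Fin.tail s) j := by
      intro j
      conv_lhs => rw [← Fin.cons_self_tail s]
      exact SS_cons _ _ _
    dsimp only
    rw [Fin.prod_univ_succ]
    simp only [Fin.val_succ, Fin.val_zero, Function.comp_apply, Fin.tail, hS, SS_zero,
      add_zero]
    have hg : ((m:ℚ)+(u:ℚ)+((s 0 + SS (Fin.tail s) l : ℕ):ℚ)+1/2)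
        = ((m:ℚ)+((u+s 0 : ℕ):ℚ)+((SS (Fin.tail s) l : ℕ):ℚ)+1/2) := by push_cast; ring
    have hpp : m + u + (s 0 + SS (Fin.tail s) l) = m + (u + s 0) + SS (Fin.tail s) l := by
      omega
    rw [hg, hpp, pow_add]
    have hprod : ∀ i : Fin l,
        Pratio (y i.succ) u (s 0 + SS (Fin.tail s) ((i:ℕ)+1) + 1) (m + (s 0 + SS (Fin.tail s) (i:ℕ)))
        = Pratio (y i.succ) (u + s 0) (SS (Fin.tail s) ((i:ℕ)+1) + 1) (m + SS (Fin.tail s) (i:ℕ)) := by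
      intro i
      rw [show s 0 + SS (Fin.tail s) ((i:ℕ)+1) + 1 = s 0 + (SS (Fin.tail s) ((i:ℕ)+1) + 1)
          from by omega,
        show m + (s 0 + SS (Fin.tail s) (i:ℕ)) = s 0 + (m + SS (Fin.tail s) (i:ℕ)) from by omega,
        ← Pratio_shift]
    simp only [hprod]
    rw [pcoef]
    ring

lemma peel2 (l m u : ℕ) (x : ℚ) (y : Fin (l+2) → ℚ) :
    hgen (l+2) m u x y
      = ∑ p ∈ Finset.range (m+1) ×ˢ Finset.range (m+1),
          pcoef m (y 0) p.1 u * pcoef m (y 1) p.2 (u+p.1)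
            * hgen l m (u+(p.1+p.2)) x (y ∘ Fin.succ ∘ Fin.succ) := by
  rw [peel1]
  rw [Finset.sum_congr rfl (fun k _ => by rw [peel1] :
    ∀ k ∈ Finset.range (m+1), pcoef m (y 0) k u * hgen (l+1) m (u+k) x (y ∘ Fin.succ)
      = pcoef m (y 0) k u * ∑ k2 ∈ Finset.range (m+1),
          pcoef m ((y ∘ Fin.succ) 0) k2 (u+k)
            * hgen l m (u+k+k2) x ((y ∘ Fin.succ) ∘ Fin.succ))]
  simp only [Finset.mul_sum]
  rw [← Finset.sum_product']
  refine Finset.sum_congr rfl (fun p hp => ?_)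
  rw [show u+p.1+p.2 = u+(p.1+p.2) from by omega,
    show (y ∘ Fin.succ) 0 = y 1 from congrArg y (Fin.succ_zero_eq_one),
    ← mul_assoc]
  rfl

lemma hgen_swap01 (l m u : ℕ) (x : ℚ) (y : Fin (l+2) → ℚ) :
    hgen (l+2) m u x (y ∘ Equiv.swap 0 1) = hgen (l+2) m u x y := by
  rw [peel2, peel2]
  have e0 : (y ∘ Equiv.swap 0 1) 0 = y 1 := by
    simp only [Function.comp_apply, Equiv.swap_apply_left]
  have e1 : (y ∘ Equiv.swap 0 1) 1 = y 0 := by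
    simp only [Function.comp_apply, Equiv.swap_apply_right]
  have etail : (y ∘ Equiv.swap 0 1) ∘ Fin.succ ∘ Fin.succ = y ∘ Fin.succ ∘ Fin.succ := by
    funext j
    simp only [Function.comp_apply]
    have hne : (Equiv.swap (0 : Fin (l+2)) 1) j.succ.succ = j.succ.succ := by
      apply Equiv.swap_apply_of_ne_of_ne
      · exact Fin.succ_ne_zero _
      · intro hc
        have h2 : j.succ.succ = (0 : Fin (l+1)).succ := by
          rw [hc]; rfl
        exact Fin.succ_ne_zero j (Fin.succ_injective _ h2)
    rw [hne]
  rw [e0, e1, etail]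
  exact swap_sum m u (y 1) (y 0) (fun K => hgen l m (u+K) x (y ∘ Fin.succ ∘ Fin.succ))

lemma hgen_perm (m : ℕ) (x : ℚ) :
    ∀ (l u : ℕ) (y : Fin l → ℚ) (σ : Equiv.Perm (Fin l)),
      hgen l m u x (y ∘ σ) = hgen l m u x y := by
  intro l
  induction l with
  | zero =>
    intro u y σ
    have : y ∘ σ = y := funext (fun i => i.elim0)
    rw [this]
  | succ l ih =>
    have fix0 : ∀ (u : ℕ) (y : Fin (l+1) → ℚ) (σ : Equiv.Perm (Fin (l+1))), σ 0 = 0 →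
        hgen (l+1) m u x (y ∘ σ) = hgen (l+1) m u x y := by
      intro u y σ h0
      have hσ : σ = Equiv.Perm.decomposeFin.symm (Equiv.Perm.decomposeFin σ) :=
        (Equiv.symm_apply_apply _ σ).symm
      rcases hpe : Equiv.Perm.decomposeFin σ with ⟨p, e⟩
      rw [hpe] at hσ
      have hp : p = 0 := by
        have h1 : σ 0 = p := by
          conv_lhs => rw [hσ]
          exact Equiv.Perm.decomposeFin_symm_apply_zero _ _
        rw [← h1, h0]
      have hs : ∀ j : Fin l, σ j.succ = (e j).succ := by
        intro j
        conv_lhs => rw [hσ]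
        rw [Equiv.Perm.decomposeFin_symm_apply_succ, hp, Equiv.swap_self, Equiv.refl_apply]
      rw [peel1, peel1]
      refine Finset.sum_congr rfl (fun k _ => ?_)
      have he0 : (y ∘ σ) 0 = y 0 := by
        simp only [Function.comp_apply, h0]
      have hetail : (y ∘ σ) ∘ Fin.succ = (y ∘ Fin.succ) ∘ e := by
        funext j
        simp only [Function.comp_apply, hs j]
      rw [he0, hetail, ih (u+k) (y ∘ Fin.succ) e]
    intro u y σ
    by_cases h0 : σ 0 = 0
    · exact fix0 u y σ h0
    · match l, y, σ, h0, fix0, ih with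
      | 0, y, σ, h0, _, _ => exact absurd (Fin.eq_zero (σ 0)) h0
      | l+1, y, σ, h0, fix0, ih =>
        have hswap0 : ∀ (b : Fin (l+2)), b ≠ 0 → ∀ (y' : Fin (l+2) → ℚ),
            hgen (l+2) m u x (y' ∘ Equiv.swap 0 b) = hgen (l+2) m u x y' := by
          intro b hb y'
          by_cases hb1 : b = 1
          · rw [hb1]
            exact hgen_swap01 l m u x y'
          · have hfix1b : Equiv.swap (1 : Fin (l+2)) b 0 = 0 :=
              Equiv.swap_apply_of_ne_of_ne (Ne.symm one_ne_zero) (Ne.symm hb)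
            have key : Equiv.swap (0 : Fin (l+2)) b
                = Equiv.swap (1 : Fin (l+2)) b * (Equiv.swap 0 1 * Equiv.swap 1 b) := by
              have h := Equiv.swap_apply_apply (Equiv.swap (1 : Fin (l+2)) b) 0 1
              have hf1 : Equiv.swap (1 : Fin (l+2)) b 1 = b := Equiv.swap_apply_left _ _
              rw [hfix1b, hf1, Equiv.swap_inv] at h
              rw [h, mul_assoc]
            rw [key, Equiv.Perm.coe_mul, Equiv.Perm.coe_mul]
            show hgen (l+2) m u x
                (((y' ∘ ⇑(Equiv.swap (1 : Fin (l+2)) b)) ∘ ⇑(Equiv.swap (0 : Fin (l+2)) 1))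
                  ∘ ⇑(Equiv.swap (1 : Fin (l+2)) b)) = hgen (l+2) m u x y'
            rw [fix0 u ((y' ∘ ⇑(Equiv.swap (1 : Fin (l+2)) b)) ∘ ⇑(Equiv.swap (0 : Fin (l+2)) 1))
                (Equiv.swap (1 : Fin (l+2)) b) hfix1b,
              hgen_swap01,
              fix0 u y' (Equiv.swap (1 : Fin (l+2)) b) hfix1b]
        have hτ : ((Equiv.swap 0 (σ 0)) * σ) 0 = 0 := by
          simp only [Equiv.Perm.coe_mul, Function.comp_apply, Equiv.swap_apply_right]
        have hdec : (y ∘ σ) = (y ∘ (Equiv.swap 0 (σ 0))) ∘ ((Equiv.swap 0 (σ 0)) * σ) := by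
          funext j
          simp only [Function.comp_apply, Equiv.Perm.coe_mul, Equiv.swap_apply_self]
        rw [hdec, fix0 u _ _ hτ]
        exact hswap0 (σ 0) h0 y

end St10

/-- h_{ℓ,m,u} is symmetric in y₁,…,y_ℓ and satisfies the recurrence
obtained by expanding in the variable y_i. -/
theorem statement10 (n m u : ℕ) (x : ℚ) (y : Fin (n+1) → ℚ) :
    (∀ σ : Equiv.Perm (Fin (n+1)), hgen (n+1) m u x (y ∘ σ) = hgen (n+1) m u x y) ∧
    (∀ i : Fin (n+1),
      hgen (n+1) m u x y =
        ∑ k ∈ Finset.range (m+1),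
          (-1)^k * (m.choose k : ℚ) * Pratio (y i) u (k+1) m
            * hgen n m (u+k) x (y ∘ i.succAbove)) := by
  constructor
  · intro σ
    exact St10.hgen_perm m x (n+1) u y σ
  · intro i
    have hsym := St10.hgen_perm m x (n+1) u y i.cycleRange.symm
    rw [← hsym, St10.peel1]
    refine Finset.sum_congr rfl (fun k _ => ?_)
    have h0 : (y ∘ ⇑(Fin.cycleRange i).symm) 0 = y i := by
      simp only [Function.comp_apply, Fin.cycleRange_symm_zero]
    have ht : (y ∘ ⇑(Fin.cycleRange i).symm) ∘ Fin.succ = y ∘ i.succAbove := by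
      funext j
      simp only [Function.comp_apply, Fin.cycleRange_symm_succ]
    rw [h0, ht, St10.pcoef]
end
end
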